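/- Let P be a scale group acting on T_{q+1} and let ξ : ℤ → {0,…,q−1} satisfy ξ_i = 0 for all sufficiently small i (so ξ represents an end ω′ ≠ ω). Then there exists x ∈ P such that x(ξ|_m) = ξ|_{m+1} for every m ∈ ℤ; in particular x fixes both ω and ω′ and translates the bi-infinite path (ω, ω′) mapping each vertex ξ|_m to its child ξ|_{m+1}. -/

import Mathlib

namespace Scale

/-- A vertex of the `(q+1)`-regular tree `T_{q+1}`: a level `n ∈ ℤ` together with a
labelling `ℤ → Fin q` which vanishes above the level and for all sufficiently small indices. -/
@[ext] structure Vertex (q : ℕ) where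
  level : ℤ
  lab : ℤ → Fin q
  zero_gt : ∀ i : ℤ, level < i → (lab i : ℕ) = 0
  bdd : ∃ N : ℤ, ∀ i : ℤ, i < N → (lab i : ℕ) = 0

namespace Vertex

variable {q : ℕ} [NeZero q]

/-- The parent `v⁺` of a vertex. -/
def parent (v : Vertex q) : Vertex q where
  level := v.level - 1
  lab := fun i => if v.level - 1 < i then 0 else v.lab i
  zero_gt := by intro i hi; simp [hi]
  bdd := by
    obtain ⟨N, hN⟩ := v.bdd
    refine ⟨N, fun i hi => ?_⟩
    by_cases h : v.level - 1 < i
    · simp [h]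
    · simp [h, hN i hi]

/-- The child `vj` of a vertex `v`. -/
def child (v : Vertex q) (j : Fin q) : Vertex q where
  level := v.level + 1
  lab := fun i => if i = v.level + 1 then j else v.lab i
  zero_gt := by
    intro i hi
    have h1 : i ≠ v.level + 1 := by omega
    simp [h1, v.zero_gt i (by omega)]
  bdd := by
    obtain ⟨N, hN⟩ := v.bdd
    refine ⟨min N (v.level + 1), fun i hi => ?_⟩
    have h1 : i < N := lt_of_lt_of_le hi (min_le_left _ _)
    have h2 : i < v.level + 1 := lt_of_lt_of_le hi (min_le_right _ _)
    have h3 : i ≠ v.level + 1 := by omega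
    simp [h3, hN i h1]

/-- The restriction `w|_m` of a vertex to level `m`. -/
def trunc (v : Vertex q) (m : ℤ) : Vertex q where
  level := m
  lab := fun i => if m < i then 0 else v.lab i
  zero_gt := by intro i hi; simp [hi]
  bdd := by
    obtain ⟨N, hN⟩ := v.bdd
    refine ⟨N, fun i hi => ?_⟩
    by_cases h : m < i
    · simp [h]
    · simp [h, hN i hi]

/-- `w` is a descendant of `u` (in the rooted subtree `T_u`). -/
def Descendant (u w : Vertex q) : Prop := u.level ≤ w.level ∧ trunc w u.level = u

end Vertex

/-- The all-zero vertex `ṽ_n` at level `n`. -/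
def zeroVtx (q : ℕ) [NeZero q] (n : ℤ) : Vertex q where
  level := n
  lab := fun _ => 0
  zero_gt := by intro i _; simp
  bdd := ⟨0, by intro i _; simp⟩

/-- The map shifting all labels by `k` (a translation towards the end `ω` when `k > 0`). -/
def shiftMap {q : ℕ} (k : ℤ) (v : Vertex q) : Vertex q where
  level := v.level + k
  lab := fun i => v.lab (i - k)
  zero_gt := fun i hi => v.zero_gt (i - k) (by omega)
  bdd := by
    obtain ⟨N, hN⟩ := v.bdd
    exact ⟨N + k, fun i hi => hN (i - k) (by omega)⟩

/-- The translation `x̃₀ᵏ` of `T_{q+1}` as a permutation of the vertices. -/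
def shiftPerm (q : ℕ) (k : ℤ) : Equiv.Perm (Vertex q) where
  toFun := shiftMap k
  invFun := shiftMap (-k)
  left_inv := by
    intro v
    refine Vertex.ext ?_ ?_
    · show v.level + k + -k = v.level
      omega
    · funext i
      show v.lab (i - -k - k) = v.lab i
      congr 1
      omega
  right_inv := by
    intro v
    refine Vertex.ext ?_ ?_
    · show v.level + -k + k = v.level
      omega
    · funext i
      show v.lab (i - k - -k) = v.lab i
      congr 1
      omega

/-- The group `Isom(T_{q+1})_ω` of tree automorphisms fixing the distinguished end `ω`,
realised as the subgroup of permutations of the vertex set commuting with `parent`. -/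
def IsomOmega (q : ℕ) [NeZero q] : Subgroup (Equiv.Perm (Vertex q)) where
  carrier := {x | ∀ v : Vertex q, x (Vertex.parent v) = Vertex.parent (x v)}
  one_mem' := fun _ => rfl
  mul_mem' := by
    intro a b ha hb v
    show (a * b) (Vertex.parent v) = Vertex.parent ((a * b) v)
    rw [Equiv.Perm.mul_apply, Equiv.Perm.mul_apply, hb, ha]
  inv_mem' := by
    intro a ha v
    show a⁻¹ (Vertex.parent v) = Vertex.parent (a⁻¹ v)
    have h := ha (a⁻¹ v)
    rw [show a (a⁻¹ v) = v from a.apply_symm_apply v] at h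
    rw [← h, show a⁻¹ (a (a⁻¹ v).parent) = (a⁻¹ v).parent from a.symm_apply_apply _]

/-- The level shift `n(x)` of an automorphism (evaluated at the zero vertex; for members
of `IsomOmega q` the shift is the same at every vertex). -/
def lshift {q : ℕ} [NeZero q] (x : Equiv.Perm (Vertex q)) : ℤ := (x (zeroVtx q 0)).level

/-- An automorphism is elliptic if it fixes a vertex. -/
def Elliptic {q : ℕ} (x : Equiv.Perm (Vertex q)) : Prop := ∃ v : Vertex q, x v = v

/-- Topology of pointwise convergence on `X → X` for `X` discrete. -/
def funTop (X : Type*) : TopologicalSpace (X → X) :=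
  @Pi.topologicalSpace X (fun _ => X) (fun _ => ⊥)

/-- The permutation topology on `Equiv.Perm X`: pointwise stabilisers of finite sets of
points form a neighbourhood basis of the identity. -/
def permTop (X : Type*) : TopologicalSpace (Equiv.Perm X) :=
  @TopologicalSpace.induced (Equiv.Perm X) ((X → X) × (X → X))
    (fun g => ((g : X → X), ((g⁻¹ : Equiv.Perm X) : X → X)))
    (@instTopologicalSpaceProd _ _ (funTop X) (funTop X))

instance (q : ℕ) : TopologicalSpace (Equiv.Perm (Vertex q)) := permTop _

instance (q : ℕ) : TopologicalSpace (Equiv.Perm (List (Fin q))) := permTop _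

/-- A scale group: a closed subgroup of `Isom(T_{q+1})_ω` acting transitively on vertices. -/
def IsScaleGroup {q : ℕ} [NeZero q] (P : Subgroup (Equiv.Perm (Vertex q))) : Prop :=
  P ≤ IsomOmega q ∧ IsClosed (P : Set (Equiv.Perm (Vertex q))) ∧
    ∀ v w : Vertex q, ∃ x ∈ P, x v = w

/-- The stabiliser of the vertex `v` in `P`, as a subgroup of the ambient permutation group. -/
def stabIn {q : ℕ} (P : Subgroup (Equiv.Perm (Vertex q))) (v : Vertex q) :
    Subgroup (Equiv.Perm (Vertex q)) where
  carrier := {g | g ∈ P ∧ g v = v}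
  one_mem' := ⟨P.one_mem, rfl⟩
  mul_mem' := by
    intro a b ha hb
    exact ⟨P.mul_mem ha.1 hb.1, by rw [Equiv.Perm.mul_apply, hb.2, ha.2]⟩
  inv_mem' := by
    intro a ha
    refine ⟨P.inv_mem ha.1, ?_⟩
    rw [Equiv.Perm.inv_eq_iff_eq]
    exact ha.2.symm

/-- The conjugate subgroup `xVx⁻¹`. -/
def conjSub {G : Type*} [Group G] (x : G) (V : Subgroup G) : Subgroup G :=
  V.map (MulAut.conj x).toMonoidHom

/-- The vertex `ξ|_m` on the ray towards the end represented by `ξ`. -/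
def ray (q : ℕ) [NeZero q] (ξ : ℤ → Fin q) (N : ℤ) (hξ : ∀ i : ℤ, i < N → (ξ i : ℕ) = 0)
    (m : ℤ) : Vertex q where
  level := m
  lab := fun i => if m < i then 0 else ξ i
  zero_gt := by intro i hi; simp [hi]
  bdd := by
    refine ⟨N, fun i hi => ?_⟩
    by_cases h : m < i
    · simp [h]
    · simp [h, hξ i hi]

/-- The contraction group of `x` in `P`. -/
def conSet {q : ℕ} (P : Subgroup (Equiv.Perm (Vertex q))) (x : Equiv.Perm (Vertex q)) :
    Set (Equiv.Perm (Vertex q)) :=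
  {g | g ∈ P ∧ ∀ v : Vertex q, ∃ N : ℕ, ∀ n : ℕ, N ≤ n → (x ^ n * g * (x ^ n)⁻¹) v = v}


/-- `c` is a `P`-labelling of `T_{q+1}` with distinguished bi-infinite path `vp`:
each `c v` is a bijection from the directed edges out of `v` (encoded as the
neighbours of `v`) to `{0, …, q}`; the edge towards the parent is labelled `q`;
along the path `vp` the downward edges are labelled `0`; and `P` contains, for
all `u₁, u₂`, an element carrying `u₁` to `u₂` and preserving the labels on the
rooted subtree of descendants of `u₁`. -/
def IsPLabelling {q : ℕ} [NeZero q] (P : Subgroup (Equiv.Perm (Vertex q)))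
    (c : Vertex q → Vertex q → Fin (q + 1)) (vp : ℤ → Vertex q) : Prop :=
  (∀ v : Vertex q, ∀ j : Fin (q + 1),
      ∃! w : Vertex q, (Vertex.parent w = v ∨ w = Vertex.parent v) ∧ c v w = j) ∧
  (∀ v : Vertex q, (c v (Vertex.parent v) : ℕ) = q) ∧
  (∀ n : ℤ, Vertex.parent (vp (n + 1)) = vp n) ∧
  (∀ n : ℤ, (c (vp n) (vp (n + 1)) : ℕ) = 0) ∧
  (∀ u₁ u₂ : Vertex q, ∃ x, x ∈ P ∧ x u₁ = u₂ ∧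
    ∀ w w' : Vertex q, Vertex.Descendant u₁ w → Vertex.Descendant u₁ w' →
      (Vertex.parent w = w' ∨ Vertex.parent w' = w) → c (x w) (x w') = c w w')

open Classical in
/-- The standard labelling of `T_{q+1}`: the edge from `v` to its child `vj` is
labelled `j` and the edge towards the parent is labelled `q`. -/
noncomputable def stdLabel (q : ℕ) [NeZero q] : Vertex q → Vertex q → Fin (q + 1) :=
  fun v w =>
    if Vertex.parent w = v then Fin.castLE (Nat.le_succ q) (w.lab (v.level + 1))
    else Fin.last q

/-- Convert an edge label in `{0,…,q}` known to be `< q` into a letter in `{0,…,q-1}`. -/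
def toFinQ {q : ℕ} [NeZero q] (j : Fin (q + 1)) : Fin q :=
  if h : (j : ℕ) < q then ⟨j, h⟩ else ⟨0, Nat.pos_of_ne_zero (NeZero.ne q)⟩

/-- The string of labels read along the downward path of length `d` ending at `w`. -/
def labelString {q : ℕ} [NeZero q] (c : Vertex q → Vertex q → Fin (q + 1)) :
    Vertex q → ℕ → List (Fin q)
  | _, 0 => []
  | w, (d + 1) => labelString c (Vertex.parent w) d ++ [toFinQ (c (Vertex.parent w) w)]

/-- The isomorphism `φ^c_v : T_v → T_{q,q}` given by a labelling `c`: a descendant `w`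
of `v` is sent to the string of labels along the path from `v` down to `w`. -/
def phiStr {q : ℕ} [NeZero q] (c : Vertex q → Vertex q → Fin (q + 1)) (v w : Vertex q) :
    List (Fin q) :=
  labelString c w ((w.level - v.level).toNat)

/-- The set `P|_v = {φ^c_{x(v)} ∘ x ∘ (φ^c_v)⁻¹ : x ∈ P}` of sections of elements of `P`
at the vertex `v`, with respect to the labelling `c`. -/
def sectSet {q : ℕ} [NeZero q] (P : Subgroup (Equiv.Perm (Vertex q)))
    (c : Vertex q → Vertex q → Fin (q + 1)) (v : Vertex q) :
    Set (Equiv.Perm (List (Fin q))) :=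
  {g | ∃ x, x ∈ P ∧ ∀ w : Vertex q, Vertex.Descendant v w →
        g (phiStr c v w) = phiStr c (x v) (x w)}

/-- The standard isomorphism `φ_v : T_v → T_{q,q}`: a descendant `w` of `v` of level `m`
is sent to the string `(w_{n+1}, …, w_m)` where `n` is the level of `v`. -/
def stdStr {q : ℕ} (v w : Vertex q) : List (Fin q) :=
  (List.range (w.level - v.level).toNat).map fun k => w.lab (v.level + 1 + k)

/-- The set `{φ_{x(v)} ∘ x ∘ φ_v⁻¹ : x ∈ P}` with respect to the standard isomorphisms. -/
def stdSect {q : ℕ} [NeZero q] (P : Subgroup (Equiv.Perm (Vertex q))) (v : Vertex q) :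
    Set (Equiv.Perm (List (Fin q))) :=
  {g | ∃ x, x ∈ P ∧ ∀ w : Vertex q, Vertex.Descendant v w →
        g (stdStr v w) = stdStr (x v) (x w)}

/-- `Isom(T_{q,q})`: the group of permutations of the set of finite strings over
`{0,…,q-1}` preserving length and the prefix relation. -/
def RIsom (q : ℕ) : Subgroup (Equiv.Perm (List (Fin q))) where
  carrier := {g | (∀ l : List (Fin q), (g l).length = l.length) ∧
    ∀ l₁ l₂ : List (Fin q), l₁ <+: l₂ → g l₁ <+: g l₂}
  one_mem' := ⟨fun _ => rfl, fun _ _ h => h⟩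
  mul_mem' := by
    intro a b ha hb
    constructor
    · intro l
      rw [Equiv.Perm.mul_apply, ha.1, hb.1]
    · intro l₁ l₂ h
      rw [Equiv.Perm.mul_apply, Equiv.Perm.mul_apply]
      exact ha.2 _ _ (hb.2 _ _ h)
  inv_mem' := by
    intro a ha
    have hlen : ∀ l : List (Fin q), (a⁻¹ l).length = l.length := by
      intro l
      have h := ha.1 (a⁻¹ l)
      rw [show a (a⁻¹ l) = l from a.apply_symm_apply l] at h
      exact h.symm
    refine ⟨hlen, ?_⟩
    intro l₁ l₂ h
    have htake : List.take (a⁻¹ l₁).length (a⁻¹ l₂) <+: a⁻¹ l₂ := List.take_prefix _ _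
    have h2 : a (List.take (a⁻¹ l₁).length (a⁻¹ l₂)) <+: a (a⁻¹ l₂) := ha.2 _ _ htake
    rw [show a (a⁻¹ l₂) = l₂ from a.apply_symm_apply l₂] at h2
    have hle : l₁.length ≤ l₂.length := h.length_le
    have hlen3 : (a (List.take (a⁻¹ l₁).length (a⁻¹ l₂))).length = l₁.length := by
      rw [ha.1, List.length_take, hlen, hlen]
      omega
    have hpre : a (List.take (a⁻¹ l₁).length (a⁻¹ l₂)) <+: l₁ :=
      List.prefix_of_prefix_length_le h2 h (le_of_eq hlen3)
    have heq : a (List.take (a⁻¹ l₁).length (a⁻¹ l₂)) = l₁ := hpre.eq_of_length hlen3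
    have heq2 : List.take (a⁻¹ l₁).length (a⁻¹ l₂) = a⁻¹ l₁ := by
      apply a.injective
      rw [heq, show a (a⁻¹ l₁) = l₁ from a.apply_symm_apply l₁]
    rw [← heq2]
    exact List.take_prefix _ _

/-- A subgroup of `Isom(T_{q,q})` is self-replicating if it is self-similar, transitive
on level 1, and all the section homomorphisms `g ↦ g|_w` are surjective. -/
def SelfReplicating {q : ℕ} (G : Subgroup (Equiv.Perm (List (Fin q)))) : Prop :=
  (∀ w : List (Fin q), ∀ g, g ∈ G → g w = w →
      ∃ g', g' ∈ G ∧ ∀ v : List (Fin q), g (w ++ v) = w ++ g' v) ∧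
  (∀ j j' : Fin q, ∃ g ∈ G, g [j] = [j']) ∧
  (∀ w : List (Fin q), ∀ g', g' ∈ G →
      ∃ g, g ∈ G ∧ g w = w ∧ ∀ v : List (Fin q), g (w ++ v) = w ++ g' v)

/-- The stabiliser of the string `w` in `G ≤ Isom(T_{q,q})`, as a subgroup of `G`. -/
def rstab {q : ℕ} (G : Subgroup (Equiv.Perm (List (Fin q)))) (w : List (Fin q)) :
    Subgroup G where
  carrier := {g | (g : Equiv.Perm (List (Fin q))) w = w}
  one_mem' := rfl
  mul_mem' := by
    intro a b ha hb
    show ((a * b : G) : Equiv.Perm (List (Fin q))) w = w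
    rw [Subgroup.coe_mul, Equiv.Perm.mul_apply]
    rw [show (b : Equiv.Perm (List (Fin q))) w = w from hb,
      show (a : Equiv.Perm (List (Fin q))) w = w from ha]
  inv_mem' := by
    intro a ha
    show ((a⁻¹ : G) : Equiv.Perm (List (Fin q))) w = w
    rw [Subgroup.coe_inv, Equiv.Perm.inv_eq_iff_eq]
    exact (show (a : Equiv.Perm (List (Fin q))) w = w from ha).symm


/-!
By transitivity there is, for each `n : ℕ`, some `xₙ ∈ P` with `xₙ (ξ|_n) = ξ|_{n+1}`; as `xₙ`
commutes with taking parents, it then maps `ξ|_m` to `ξ|_{m+1}` for every `m ≤ n`. Every vertex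
`v` has an ancestor on the ray, so `xₙ v` and `xₙ⁻¹ v` eventually range over the finitely many
descendants, at a fixed depth, of two ray vertices. Hence the `xₙ` converge along an ultrafilter
in the permutation topology; the limit lies in `P` because `P` is closed, and it translates the
whole ray because each `ξ|_m` is eventually moved correctly.
-/

section PermTopology

open Filter

theorem tendsto_permTop_iff {X ι : Type*} {l : Filter ι} {g : ι → Equiv.Perm X}
    {x : Equiv.Perm X} :
    Tendsto g l (@nhds _ (permTop X) x) ↔
      ∀ a, (∀ᶠ i in l, g i a = x a) ∧ ∀ᶠ i in l, (g i)⁻¹ a = x⁻¹ a := by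
  let _ : TopologicalSpace X := ⊥
  have : DiscreteTopology X := ⟨rfl⟩
  rw [permTop, nhds_induced, tendsto_comap_iff, funTop, nhds_prod_eq, tendsto_prod_iff',
    tendsto_pi_nhds, tendsto_pi_nhds, ← forall_and]
  simp only [Function.comp_apply, nhds_discrete, tendsto_pure]

theorem _root_.Ultrafilter.exists_eventually_eq_of_finite {ι α : Type*} (U : Ultrafilter ι)
    {f : ι → α} {s : Set α} (hs : s.Finite) (h : ∀ᶠ i in U, f i ∈ s) :
    ∃ a, ∀ᶠ i in U, f i = a := by
  obtain ⟨a, -, ha⟩ := Ultrafilter.eq_pure_of_finite_mem hs (show s ∈ U.map f from h)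
  exact ⟨a, show {a} ∈ U.map f by rw [ha]; exact Ultrafilter.mem_pure.2 rfl⟩

theorem exists_tendsto_permTop {X ι : Type*} (U : Ultrafilter ι) (g : ι → Equiv.Perm X)
    (hfin : ∀ a, ∃ s : Set X, s.Finite ∧ ∀ᶠ i in U, g i a ∈ s ∧ (g i)⁻¹ a ∈ s) :
    ∃ x, Tendsto g U (@nhds _ (permTop X) x) := by
  choose s hs hgs using hfin
  choose y hy using fun a =>
    U.exists_eventually_eq_of_finite (hs a) ((hgs a).mono fun _ h => h.1)
  choose z hz using fun a =>
    U.exists_eventually_eq_of_finite (hs a) ((hgs a).mono fun _ h => h.2)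
  have hzy : ∀ a, z (y a) = a := fun a => by
    obtain ⟨i, h₁, h₂⟩ := ((hy a).and (hz (y a))).exists
    rw [← h₂, ← h₁]; exact (g i).symm_apply_apply a
  have hyz : ∀ a, y (z a) = a := fun a => by
    obtain ⟨i, h₁, h₂⟩ := ((hz a).and (hy (z a))).exists
    rw [← h₂, ← h₁]; exact (g i).apply_symm_apply a
  exact ⟨⟨y, z, hzy, hyz⟩, tendsto_permTop_iff.2 fun a => ⟨hy a, hz a⟩⟩

end PermTopology

namespace Vertex

theorem ext_of_lab_le {q : ℕ} {v w : Vertex q} (hl : v.level = w.level)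
    (h : ∀ i ≤ v.level, v.lab i = w.lab i) : v = w := by
  refine Vertex.ext hl (funext fun i => ?_)
  by_cases hi : i ≤ v.level
  · exact h i hi
  · exact Fin.ext ((v.zero_gt i (by omega)).trans (w.zero_gt i (by omega)).symm)

variable {q : ℕ} [NeZero q]

theorem parent_level (v : Vertex q) : v.parent.level = v.level - 1 := rfl

theorem parent_lab_of_lt (v : Vertex q) {i : ℤ} (hi : i < v.level) :
    v.parent.lab i = v.lab i :=
  if_neg (by omega)

theorem parent_iterate_level (k : ℕ) (v : Vertex q) :
    (parent^[k] v).level = v.level - k := by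
  induction k with
  | zero => simp
  | succ k ih =>
    rw [Function.iterate_succ_apply', parent_level, ih]
    push_cast
    ring

theorem parent_iterate_lab (k : ℕ) (v : Vertex q) {i : ℤ} (hi : i ≤ v.level - k) :
    (parent^[k] v).lab i = v.lab i := by
  induction k with
  | zero => simp
  | succ k ih =>
    rw [Function.iterate_succ_apply', parent_lab_of_lt _ (by rw [parent_iterate_level]; omega)]
    exact ih (by omega)

theorem child_eq_of_parent_eq {u w : Vertex q} (h : w.parent = u) :
    u.child (w.lab (u.level + 1)) = w := by
  subst h
  refine ext_of_lab_le (by simp [child, parent]) fun i hi => ?_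
  have hi' : i ≤ w.level := by simpa [child, parent] using hi
  by_cases hw : i = w.level
  · simp [child, parent, hw]
  · simp only [child, parent, sub_add_cancel, if_neg hw]
    exact parent_lab_of_lt w (by omega)

theorem finite_setOf_parent_iterate_eq (k : ℕ) (u : Vertex q) :
    {w : Vertex q | parent^[k] w = u}.Finite := by
  induction k generalizing u with
  | zero => simp
  | succ k ih =>
    have hsub : {w : Vertex q | parent^[k + 1] w = u} ⊆
        ⋃ v ∈ {v : Vertex q | parent^[k] v = u}, Set.range v.child := fun w hw =>
      Set.mem_biUnion (x := w.parent)
        (by simpa only [Set.mem_ofPred_eq, Function.iterate_succ_apply] using hw)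
        ⟨_, child_eq_of_parent_eq rfl⟩
    exact (ih u).biUnion (fun v _ => Set.finite_range v.child) |>.subset hsub

theorem map_parent_iterate_of_mem_isomOmega {x : Equiv.Perm (Vertex q)} (hx : x ∈ IsomOmega q)
    (k : ℕ) (v : Vertex q) : x (parent^[k] v) = parent^[k] (x v) := by
  induction k with
  | zero => rfl
  | succ k ih => rw [Function.iterate_succ_apply', Function.iterate_succ_apply', hx, ih]

end Vertex

section Ray

variable {q : ℕ} [NeZero q] (ξ : ℤ → Fin q) (N : ℤ) (hξ : ∀ i : ℤ, i < N → (ξ i : ℕ) = 0)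

theorem ray_lab_of_le {m i : ℤ} (hi : i ≤ m) : (ray q ξ N hξ m).lab i = ξ i :=
  if_neg (by omega)

theorem parent_ray (m : ℤ) : (ray q ξ N hξ m).parent = ray q ξ N hξ (m - 1) :=
  Vertex.ext_of_lab_le rfl fun i hi => by
    rw [Vertex.parent_lab_of_lt _ (by simp only [Vertex.parent_level, ray] at hi ⊢; omega),
      ray_lab_of_le _ _ _ (by simp only [Vertex.parent_level, ray] at hi; omega),
      ray_lab_of_le _ _ _ (by simpa only [Vertex.parent_level, ray] using hi)]

theorem parent_iterate_ray (k : ℕ) (m : ℤ) :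
    Vertex.parent^[k] (ray q ξ N hξ m) = ray q ξ N hξ (m - k) := by
  induction k with
  | zero => simp
  | succ k ih =>
    rw [Function.iterate_succ_apply', ih, parent_ray]
    push_cast
    ring_nf

theorem exists_parent_iterate_eq_ray (v : Vertex q) :
    ∃ (a : ℤ) (d : ℕ), Vertex.parent^[d] v = ray q ξ N hξ a := by
  obtain ⟨M, hM⟩ := v.bdd
  refine ⟨min (min M N) v.level - 1, (v.level - (min (min M N) v.level - 1)).toNat,
    Vertex.ext_of_lab_le ?_ fun i hi => ?_⟩
  · rw [Vertex.parent_iterate_level]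
    simp only [ray]
    omega
  · rw [Vertex.parent_iterate_level] at hi
    rw [Vertex.parent_iterate_lab _ _ hi, ray_lab_of_le _ _ _ (by omega)]
    exact Fin.ext ((hM i (by omega)).trans (hξ i (by omega)).symm)

theorem apply_ray_of_le {x : Equiv.Perm (Vertex q)} (hx : x ∈ IsomOmega q) {m a : ℤ}
    (hm : x (ray q ξ N hξ m) = ray q ξ N hξ (m + 1)) (ha : a ≤ m) :
    x (ray q ξ N hξ a) = ray q ξ N hξ (a + 1) := by
  have key := Vertex.map_parent_iterate_of_mem_isomOmega hx (m - a).toNat (ray q ξ N hξ m)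
  rwa [hm, parent_iterate_ray, parent_iterate_ray, Int.toNat_of_nonneg (by omega),
    sub_sub_cancel, show m + 1 - (m - a) = a + 1 by ring] at key

open Filter in
theorem exists_finite_eventually_mem {xs : ℕ → Equiv.Perm (Vertex q)}
    (hxs : ∀ n, xs n ∈ IsomOmega q)
    (hstep : ∀ n : ℕ, xs n (ray q ξ N hξ n) = ray q ξ N hξ (n + 1)) (v : Vertex q) :
    ∃ s : Set (Vertex q), s.Finite ∧ ∀ᶠ n in atTop, xs n v ∈ s ∧ (xs n)⁻¹ v ∈ s := by
  obtain ⟨a, d, hv⟩ := exists_parent_iterate_eq_ray ξ N hξ v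
  refine ⟨{w | Vertex.parent^[d] w = ray q ξ N hξ (a + 1)} ∪
      {w | Vertex.parent^[d] w = ray q ξ N hξ (a - 1)},
    (Vertex.finite_setOf_parent_iterate_eq _ _).union (Vertex.finite_setOf_parent_iterate_eq _ _),
    ?_⟩
  filter_upwards [eventually_ge_atTop a.toNat] with n hn
  have hup : xs n (ray q ξ N hξ a) = ray q ξ N hξ (a + 1) :=
    apply_ray_of_le ξ N hξ (hxs n) (hstep n) (by omega)
  have hdown : (xs n)⁻¹ (ray q ξ N hξ a) = ray q ξ N hξ (a - 1) := by
    rw [Equiv.Perm.inv_eq_iff_eq, apply_ray_of_le ξ N hξ (hxs n) (hstep n) (by omega),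
      sub_add_cancel]
  refine ⟨Or.inl ?_, Or.inr ?_⟩
  · rw [Set.mem_ofPred_eq, ← Vertex.map_parent_iterate_of_mem_isomOmega (hxs n), hv, hup]
  · rw [Set.mem_ofPred_eq, ← Vertex.map_parent_iterate_of_mem_isomOmega (inv_mem (hxs n)), hv,
      hdown]

end Ray

end Scale

open Scale Filter in
theorem statement_3_general (q : ℕ) [NeZero q]
    (P : Subgroup (Equiv.Perm (Vertex q))) (hP : IsScaleGroup P)
    (ξ : ℤ → Fin q) (N : ℤ) (hξ : ∀ i : ℤ, i < N → (ξ i : ℕ) = 0) :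
    ∃ x ∈ P, ∀ m : ℤ, x (ray q ξ N hξ m) = ray q ξ N hξ (m + 1) := by
  obtain ⟨hPω, hPclosed, hPtrans⟩ := hP
  choose xs hxsP hxs using fun n : ℕ => hPtrans (ray q ξ N hξ n) (ray q ξ N hξ (n + 1))
  let U : Ultrafilter ℕ := Ultrafilter.of atTop
  obtain ⟨x, hx⟩ := exists_tendsto_permTop U xs fun v =>
    (exists_finite_eventually_mem ξ N hξ (fun n => hPω (hxsP n)) hxs v).imp
      fun _ hs => ⟨hs.1, Ultrafilter.of_le atTop hs.2⟩
  refine ⟨x, hPclosed.mem_of_tendsto hx (Eventually.of_forall hxsP), fun m => ?_⟩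
  have hm : ∀ᶠ n : ℕ in U, m ≤ n :=
    Ultrafilter.of_le atTop ((eventually_ge_atTop m.toNat).mono fun _ _ => by omega)
  obtain ⟨n, hxn, hmn⟩ := ((tendsto_permTop_iff.1 hx _).1.and hm).exists
  rw [← hxn, apply_ray_of_le ξ N hξ (hPω (hxsP n)) (hxs n) (by omega)]

open Scale in
/-- For any end `ω' ≠ ω`, represented by `ξ`, a scale group contains an
element translating the bi-infinite path `(ω, ω')` one step towards `ω'`:
`x(ξ|_m) = ξ|_{m+1}` for every `m`. -/
theorem statement_3 (q : ℕ) [NeZero q] (hq : 2 ≤ q)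
    (P : Subgroup (Equiv.Perm (Vertex q))) (hP : IsScaleGroup P)
    (ξ : ℤ → Fin q) (N : ℤ) (hξ : ∀ i : ℤ, i < N → (ξ i : ℕ) = 0) :
    ∃ x ∈ P, ∀ m : ℤ, x (ray q ξ N hξ m) = ray q ξ N hξ (m + 1) :=
  statement_3_general q P hP ξ N hξ
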